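/- For every integer k ≥ 1 with k ≡ 1 (mod 10), the graph G consisting of the disjoint union of (k−1)/5 copies of the 5-cycle C_5 and 3(k−1)/10 copies of the path P_4 on four vertices has exactly 11(k−1)/5 vertices, has maximum degree at most 2, and has no induced subgraph that is regular and has k or more vertices. (Hence the bound f(k,2) ≤ 11(k−1)/5 is tight.) -/

import Mathlib

/-!
An `r`-regular induced subgraph has `r ≤ 2`, and it meets every component in an `r`-regular
induced subgraph of that component. For `r = 2` this means whole cycles: at most `5` vertices
from each `C₅` and none from a `P₄`. For `r ∈ {0, 1}` it takes at most `2` vertices from each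
`C₅` and from each `P₄`. Both counts give `5 · (k-1)/5 = 2 · (k-1)/5 + 2 · 3(k-1)/10 = k - 1`.
-/

/-- The degree of a vertex: the number of its neighbors (graph on a finite type). -/
noncomputable def ndeg {V : Type*} (G : SimpleGraph V) (v : V) : ℕ :=
  (G.neighborSet v).ncard

/-- A graph is regular if all its vertices have the same degree. -/
def IsRegularGraph {V : Type*} (G : SimpleGraph V) : Prop :=
  ∃ r : ℕ, ∀ v, ndeg G v = r

/-- Disjoint copies of the graph `H`, indexed by `I`. -/
def copies (I : Type*) {α : Type*} (H : SimpleGraph α) : SimpleGraph (I × α) where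
  Adj a b := a.1 = b.1 ∧ H.Adj a.2 b.2
  symm := ⟨fun a b h => ⟨h.1.symm, h.2.symm⟩⟩
  loopless := ⟨fun a h => H.loopless.irrefl a.2 h.2⟩

open SimpleGraph Finset

instance (n : ℕ) : DecidableRel (pathGraph n).Adj := fun _ _ =>
  decidable_of_iff _ pathGraph_adj.symm

section Transfer

variable {V α : Type*}

lemma ndeg_induce (G : SimpleGraph V) (s : Set V) (v : s) :
    ndeg (G.induce s) v = (s ∩ G.neighborSet v).ncard := by
  rw [ndeg, ← Set.ncard_image_of_injective _ Subtype.val_injective]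
  congr 1
  ext w
  simp [and_comm]

lemma ndeg_induce_le [Finite V] (G : SimpleGraph V) (s : Set V) (v : s) :
    ndeg (G.induce s) v ≤ ndeg G v := by
  rw [ndeg_induce]
  exact Set.ncard_le_ncard Set.inter_subset_right

lemma ndeg_eq_degree [Fintype V] (G : SimpleGraph V) [DecidableRel G.Adj] (v : V) :
    ndeg G v = G.degree v := by
  rw [ndeg, ← Nat.card_coe_set_eq, Nat.card_eq_fintype_card, card_neighborSet_eq_degree]

variable {G : SimpleGraph V} {H : SimpleGraph α} {f : α → V}

lemma ncard_inter_neighborSet_of_eq_image (hf : f.Injective)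
    (hN : ∀ a, G.neighborSet (f a) = f '' H.neighborSet a) (s : Set V) (a : α) :
    (s ∩ G.neighborSet (f a)).ncard = (f ⁻¹' s ∩ H.neighborSet a).ncard := by
  rw [hN, Set.inter_comm, ← Set.image_inter_preimage, Set.ncard_image_of_injective _ hf,
    Set.inter_comm]

lemma ndeg_of_eq_image (hf : f.Injective)
    (hN : ∀ a, G.neighborSet (f a) = f '' H.neighborSet a) (a : α) :
    ndeg G (f a) = ndeg H a := by
  simpa [ndeg] using ncard_inter_neighborSet_of_eq_image hf hN Set.univ a

/-- A decidable form of `(H.induce t).IsRegularOfDegree r`, so that small cases can be settled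
by `decide`. -/
def IsRegularOn (H : SimpleGraph α) [DecidableRel H.Adj] (t : Finset α) (r : ℕ) : Prop :=
  ∀ a ∈ t, #{b ∈ t | H.Adj a b} = r

lemma isRegularOn_of_induce [Fintype α] [DecidableRel H.Adj] {s : Set V} [DecidablePred (· ∈ s)]
    (hf : f.Injective) (hN : ∀ a, G.neighborSet (f a) = f '' H.neighborSet a) {r : ℕ}
    (hs : ∀ v : s, ndeg (G.induce s) v = r) : IsRegularOn H {a | f a ∈ s} r := by
  intro a ha
  have hdeg := hs ⟨f a, (mem_filter.1 ha).2⟩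
  rw [ndeg_induce, ncard_inter_neighborSet_of_eq_image hf hN] at hdeg
  rw [← hdeg, ← Set.ncard_coe_finset]
  congr 1
  ext b
  simp

end Transfer

section Copies

variable {I J α β : Type*}

lemma neighborSet_copies (H : SimpleGraph α) (i : I) (a : α) :
    (copies I H).neighborSet (i, a) = Prod.mk i '' H.neighborSet a := by
  ext ⟨j, b⟩
  simp [copies, eq_comm, and_comm]

lemma neighborSet_sum_copies_inl (H₁ : SimpleGraph α) (H₂ : SimpleGraph β) (i : I) (a : α) :
    (copies I H₁ ⊕g copies J H₂).neighborSet (.inl (i, a)) =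
      (fun b => .inl (i, b)) '' H₁.neighborSet a := by
  rw [neighborSet_sum_inl, neighborSet_copies, Set.image_image]

lemma neighborSet_sum_copies_inr (H₁ : SimpleGraph α) (H₂ : SimpleGraph β) (j : J) (a : β) :
    (copies I H₁ ⊕g copies J H₂).neighborSet (.inr (j, a)) =
      (fun b => .inr (j, b)) '' H₂.neighborSet a := by
  rw [neighborSet_sum_inr, neighborSet_copies, Set.image_image]

lemma sum_inl_prodMk_injective (i : I) :
    Function.Injective (fun a : α => (.inl (i, a) : (I × α) ⊕ (J × β))) :=
  Sum.inl_injective.comp (Prod.mk_right_injective i)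

lemma sum_inr_prodMk_injective (j : J) :
    Function.Injective (fun b : β => (.inr (j, b) : (I × α) ⊕ (J × β))) :=
  Sum.inr_injective.comp (Prod.mk_right_injective j)

lemma ncard_eq_sum_card_fibers [Fintype I] [Fintype J] [Fintype α] [Fintype β]
    (s : Set ((I × α) ⊕ (J × β))) [DecidablePred (· ∈ s)] :
    s.ncard = ∑ i, #{a | .inl (i, a) ∈ s} + ∑ j, #{b | .inr (j, b) ∈ s} := by
  rw [Set.ncard_eq_toFinset_card', ← Set.filter_mem_univ_eq_toFinset]
  simp only [card_filter, Fintype.sum_sum_type, Fintype.sum_prod_type]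

end Copies

section SmallCases

lemma card_le_two_of_isRegularOn_cycleGraph_five {t : Finset (Fin 5)} {r : ℕ}
    (ht : IsRegularOn (cycleGraph 5) t r) (hr : r < 2) : #t ≤ 2 := by
  revert ht
  unfold IsRegularOn
  interval_cases r <;> revert t <;> decide

lemma card_le_two_of_isRegularOn_pathGraph_four {t : Finset (Fin 4)} {r : ℕ}
    (ht : IsRegularOn (pathGraph 4) t r) (hr : r < 2) : #t ≤ 2 := by
  revert ht
  unfold IsRegularOn
  interval_cases r <;> revert t <;> decide

lemma eq_empty_of_isRegularOn_pathGraph_four_two {t : Finset (Fin 4)}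
    (ht : IsRegularOn (pathGraph 4) t 2) : t = ∅ := by
  revert ht
  unfold IsRegularOn
  revert t
  decide

end SmallCases

section CyclesAndPaths

variable {m n : ℕ}

lemma ndeg_le_two (v : (Fin m × Fin 5) ⊕ (Fin n × Fin 4)) :
    ndeg (copies (Fin m) (cycleGraph 5) ⊕g copies (Fin n) (pathGraph 4)) v ≤ 2 := by
  rcases v with ⟨i, a⟩ | ⟨j, a⟩
  · rw [ndeg_of_eq_image (sum_inl_prodMk_injective i)
      (neighborSet_sum_copies_inl _ _ i), ndeg_eq_degree]
    revert a
    decide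
  · rw [ndeg_of_eq_image (sum_inr_prodMk_injective j)
      (neighborSet_sum_copies_inr _ _ j), ndeg_eq_degree]
    revert a
    decide

lemma ncard_le_of_isRegularGraph_induce {s : Set ((Fin m × Fin 5) ⊕ (Fin n × Fin 4))}
    (hs : IsRegularGraph
      ((copies (Fin m) (cycleGraph 5) ⊕g copies (Fin n) (pathGraph 4)).induce s)) :
    s.ncard ≤ max (5 * m) (2 * m + 2 * n) := by
  classical
  obtain ⟨r, hr⟩ := hs
  rcases s.eq_empty_or_nonempty with rfl | ⟨v, hv⟩
  · simp
  have hr2 : r ≤ 2 := hr ⟨v, hv⟩ ▸ (ndeg_induce_le _ _ _).trans (ndeg_le_two v)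
  have hC : ∀ i, IsRegularOn (cycleGraph 5) {a | .inl (i, a) ∈ s} r := fun i =>
    isRegularOn_of_induce (sum_inl_prodMk_injective i)
      (neighborSet_sum_copies_inl _ _ i) hr
  have hP : ∀ j, IsRegularOn (pathGraph 4) {b | .inr (j, b) ∈ s} r := fun j =>
    isRegularOn_of_induce (sum_inr_prodMk_injective j)
      (neighborSet_sum_copies_inr _ _ j) hr
  rw [ncard_eq_sum_card_fibers]
  obtain rfl | hr2 := hr2.eq_or_lt
  · calc _ ≤ ∑ _i : Fin m, 5 + ∑ _j : Fin n, 0 := by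
          gcongr with i _ j
          · exact card_le_univ _
          · rw [eq_empty_of_isRegularOn_pathGraph_four_two (hP j), card_empty]
      _ ≤ _ := by simp [mul_comm]
  · calc _ ≤ ∑ _i : Fin m, 2 + ∑ _j : Fin n, 2 := by
          gcongr with i _ j
          · exact card_le_two_of_isRegularOn_cycleGraph_five (hC i) hr2
          · exact card_le_two_of_isRegularOn_pathGraph_four (hP j) hr2
      _ ≤ _ := by simp [mul_comm]

end CyclesAndPaths

theorem stmt_12_general (k : ℕ) (hk10 : k % 10 = 1) :
    let G := (copies (Fin ((k - 1) / 5)) (SimpleGraph.cycleGraph 5)) ⊕g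
             (copies (Fin (3 * (k - 1) / 10)) (SimpleGraph.pathGraph 4))
    5 * Nat.card ((Fin ((k - 1) / 5) × Fin 5) ⊕ (Fin (3 * (k - 1) / 10) × Fin 4))
        = 11 * (k - 1) ∧
    (∀ v, ndeg G v ≤ 2) ∧
    ¬ ∃ s : Set ((Fin ((k - 1) / 5) × Fin 5) ⊕ (Fin (3 * (k - 1) / 10) × Fin 4)),
        k ≤ s.ncard ∧ IsRegularGraph (G.induce s) := by
  intro G
  refine ⟨?_, ndeg_le_two, fun ⟨s, hks, hs⟩ => ?_⟩
  · simp only [Nat.card_eq_fintype_card, Fintype.card_sum, Fintype.card_prod, Fintype.card_fin]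
    omega
  · have := ncard_le_of_isRegularGraph_induce hs
    omega

/-- For `k ≡ 1 (mod 10)`, the disjoint union of `(k-1)/5` copies of `C₅` and `3(k-1)/10`
copies of `P₄` has exactly `11(k-1)/5` vertices, maximum degree at most `2`, and no regular
induced subgraph with `k` or more vertices; hence the bound `f(k,2) ≤ 11(k-1)/5` is tight. -/
theorem stmt_12 (k : ℕ) (hk : 1 ≤ k) (hk10 : k % 10 = 1) :
    let G := (copies (Fin ((k - 1) / 5)) (SimpleGraph.cycleGraph 5)) ⊕g
             (copies (Fin (3 * (k - 1) / 10)) (SimpleGraph.pathGraph 4))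
    5 * Nat.card ((Fin ((k - 1) / 5) × Fin 5) ⊕ (Fin (3 * (k - 1) / 10) × Fin 4))
        = 11 * (k - 1) ∧
    (∀ v, ndeg G v ≤ 2) ∧
    ¬ ∃ s : Set ((Fin ((k - 1) / 5) × Fin 5) ⊕ (Fin (3 * (k - 1) / 10) × Fin 4)),
        k ≤ s.ncard ∧ IsRegularGraph (G.induce s) :=
  stmt_12_general k hk10
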